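/- Let f, k : ℝ^d → ℝ ∪ {∞} be Legendre convex functions and L* ≥ 0. Then k is L*-smooth relative to f* on int(dom f*) if and only if ∇f(int(dom f)) ⊆ int(dom k) and for all x, y ∈ int(dom f), D_k(∇f(y), ∇f(x)) ≤ L*·D_f(x, y). -/

import Mathlib

/-
Write `ψ = f*` and `Q = int(dom f*)`. At `x ∈ int(dom f)` the Fenchel–Young inequality is an
equality at `∇f x`, so `x` is a subgradient of `ψ` at `∇f x` and
`D_ψ(∇f y, ∇f x) = D_f(x, y)`. Moreover `∇f` maps `int(dom f)` onto `Q`. Strict convexity makes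
`f - ⟪·, ∇f x⟫` grow linearly, so `ψ` is finite near `∇f x`. Conversely, for `y ∈ Q` the convex
function `ψ` is bounded near `y`, so `f - ⟪·, y⟫` grows linearly; by closedness of the epigraph
it attains its minimum, by essential smoothness at an interior point `x`, where `∇f x = y`.

Hence, with `u = ∇f x` and `v = ∇f y`, the inequality `D_k(v, u) ≤ L·D_f(x, y)` says that
`L·x - ∇k u` is a subgradient of `h = L·ψ - k` at `u`, tested at `v`. A function on the convex set
`Q` having such subgradients everywhere is convex; conversely, if `h` is convex, differentiating
`k` along segments shows that `L·x - ∇k u` is a subgradient of `h` (here `L ≥ 0` makes `L·x` a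
subgradient of `L·ψ`).
-/

open Filter Topology RealInnerProductSpace Classical

noncomputable section

abbrev E (d : ℕ) := EuclideanSpace ℝ (Fin d)

def IsEssentiallySmooth {d : ℕ} (f : E d → ℝ) (S : Set (E d)) (f' : E d → E d) : Prop :=
  (interior S).Nonempty ∧
  (∀ x ∈ interior S, HasGradientAt f (f' x) x) ∧
  ∀ (u : ℕ → E d) (y : E d), (∀ n, u n ∈ interior S) → y ∈ frontier S →
    Tendsto u atTop (𝓝 y) → Tendsto (fun n => ‖f' (u n)‖) atTop atTop

def IsProperClosedConvexOn {d : ℕ} (f : E d → ℝ) (S : Set (E d)) : Prop :=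
  S.Nonempty ∧ ConvexOn ℝ S f ∧
  IsClosed {p : E d × ℝ | p.1 ∈ S ∧ f p.1 ≤ p.2}

def IsLegendre {d : ℕ} (f : E d → ℝ) (S : Set (E d)) (f' : E d → E d) : Prop :=
  IsProperClosedConvexOn f S ∧ IsEssentiallySmooth f S f' ∧
  StrictConvexOn ℝ (interior S) f

/-- The convex conjugate `f*` of the function equal to `f` on `S` and `∞` outside. -/
def conj {d : ℕ} (f : E d → ℝ) (S : Set (E d)) : E d → EReal :=
  fun y => ⨆ x ∈ S, ((⟪x, y⟫ - f x : ℝ) : EReal)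

/-- `k` (with domain `Sk`) is `L`-smooth relative to the extended-real-valued convex
function `φ` on `Q`: `Q ⊆ dom k ∩ dom φ` and `L·φ - k` is convex on `Q`. -/
def RelSmoothOn {d : ℕ} (k : E d → ℝ) (Sk : Set (E d)) (φ : E d → EReal)
    (Q : Set (E d)) (L : ℝ) : Prop :=
  Q ⊆ Sk ∧ (∀ y ∈ Q, φ y ≠ ⊤ ∧ φ y ≠ ⊥) ∧
  ConvexOn ℝ Q (fun y => L * (φ y).toReal - k y)

open Set

section Normed

variable {F : Type*} [NormedAddCommGroup F]

theorem exists_isMinOn_of_isClosed_epigraph [ProperSpace F] {g : F → ℝ} {S : Set F}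
    (hS : S.Nonempty) (hepi : IsClosed {p : F × ℝ | p.1 ∈ S ∧ g p.1 ≤ p.2}) {ε C : ℝ}
    (hε : 0 < ε) (hcoer : ∀ z ∈ S, ε * ‖z‖ ≤ g z + C) : ∃ x ∈ S, IsMinOn g S x := by
  obtain ⟨x₀, hx₀⟩ := hS
  set K := {z | z ∈ S ∧ g z ≤ g x₀}
  have hKclosed : IsClosed K := hepi.preimage (continuous_id.prodMk continuous_const)
  have hKcompact : IsCompact K := by
    refine Metric.isCompact_of_isClosed_isBounded hKclosed
      ((Metric.isBounded_closedBall (x := (0 : F)) (r := (g x₀ + C) / ε)).subset ?_)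
    rintro z ⟨hz, hgz⟩
    rw [Metric.mem_closedBall, dist_zero_right, le_div_iff₀ hε]
    linarith [hcoer z hz]
  have hlsc : LowerSemicontinuousOn g K := by
    refine (lowerSemicontinuousOn_iff_isClosed_epigraph hKclosed).2 ?_
    convert hepi.inter (hKclosed.preimage continuous_fst) using 1
    ext p
    simp only [mem_ofPred_eq, mem_inter_iff, mem_preimage, K]
    tauto
  obtain ⟨x, ⟨hxS, hxle⟩, hmin⟩ :=
    LowerSemicontinuousOn.exists_isMinOn (s := K) ⟨x₀, hx₀, le_rfl⟩ hKcompact hlsc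
  refine ⟨x, hxS, fun z hz => ?_⟩
  rcases le_or_gt (g z) (g x₀) with hzle | hzgt
  · exact hmin ⟨hz, hzle⟩
  · exact hxle.trans hzgt.le

variable [NormedSpace ℝ F]

theorem ConvexOn.mul_norm_sub_le_of_forall_norm_sub_eq {G : F → ℝ} {S : Set F}
    (hG : ConvexOn ℝ S G) {x₀ z : F} {r m : ℝ} (hx₀ : x₀ ∈ S) (hz : z ∈ S) (hr : 0 < r)
    (hrz : r ≤ ‖z - x₀‖) (hm : ∀ w ∈ S, ‖w - x₀‖ = r → G x₀ + m ≤ G w) :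
    m * ‖z - x₀‖ ≤ r * (G z - G x₀) := by
  have hpos : 0 < ‖z - x₀‖ := hr.trans_le hrz
  set t := r / ‖z - x₀‖
  have ht₀ : 0 ≤ t := by positivity
  have ht₁ : t ≤ 1 := div_le_one_of_le₀ hrz hpos.le
  have hw : (1 - t) • x₀ + t • z ∈ S := hG.1 hx₀ hz (by linarith) ht₀ (by ring)
  have hnorm : ‖(1 - t) • x₀ + t • z - x₀‖ = r := by
    rw [show (1 - t) • x₀ + t • z - x₀ = t • (z - x₀) by module, norm_smul,
      Real.norm_of_nonneg ht₀, div_mul_cancel₀ _ hpos.ne']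
  have hconv := hG.2 hx₀ hz (by linarith : 0 ≤ 1 - t) ht₀ (by ring)
  have hlow := hm _ hw hnorm
  simp only [smul_eq_mul] at hconv
  have : m ≤ t * (G z - G x₀) := by linarith
  calc m * ‖z - x₀‖ ≤ t * (G z - G x₀) * ‖z - x₀‖ := by gcongr
    _ = r * (G z - G x₀) := by simp only [t]; field_simp

end Normed

theorem HasDerivAt.le_of_forall_mul_le_sub {φ : ℝ → ℝ} {c a : ℝ} (hφ : HasDerivAt φ c 0)
    (h : ∀ t ∈ Ioc (0 : ℝ) 1, a * t ≤ φ t - φ 0) : a ≤ c := by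
  refine ge_of_tendsto ((hasDerivWithinAt_iff_tendsto_slope' self_notMem_Ioi).mp
    hφ.hasDerivWithinAt) ?_
  filter_upwards [Ioc_mem_nhdsGT (zero_lt_one' ℝ)] with t ht
  rw [slope_def_field, sub_zero, le_div_iff₀ ht.1]
  exact h t ht

section InnerProduct

variable {F : Type*} [NormedAddCommGroup F] [InnerProductSpace ℝ F]

theorem exists_norm_le_one_inner_eq_norm (s : F) : ∃ v : F, ‖v‖ ≤ 1 ∧ ⟪s, v⟫ = ‖s‖ := by
  rcases eq_or_ne s 0 with rfl | hs
  · exact ⟨0, by simp⟩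
  refine ⟨‖s‖⁻¹ • s, (norm_smul_inv_norm hs).le, ?_⟩
  rw [real_inner_smul_right, real_inner_self_eq_norm_sq]
  field_simp

theorem ConvexOn.sub_inner_right {f : F → ℝ} {S : Set F} (hf : ConvexOn ℝ S f) (y : F) :
    ConvexOn ℝ S (fun z => f z - ⟪z, y⟫) := by
  refine (hf.sub ((innerSL ℝ y).toLinearMap.concaveOn hf.1)).congr fun z _ => ?_
  simp [real_inner_comm]

theorem isClosed_epigraph_sub_inner {f : F → ℝ} {S : Set F}
    (hf : IsClosed {p : F × ℝ | p.1 ∈ S ∧ f p.1 ≤ p.2}) (y : F) :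
    IsClosed {p : F × ℝ | p.1 ∈ S ∧ f p.1 - ⟪p.1, y⟫ ≤ p.2} := by
  convert hf.preimage (by fun_prop : Continuous fun p : F × ℝ => (p.1, p.2 + ⟪p.1, y⟫))
    using 1
  ext p
  simp

theorem convexOn_of_forall_exists_inner_le_sub {h : F → ℝ} {Q : Set F} (hQ : Convex ℝ Q)
    (hsupp : ∀ u ∈ Q, ∃ s, ∀ v ∈ Q, ⟪s, v - u⟫ ≤ h v - h u) : ConvexOn ℝ Q h := by
  refine ⟨hQ, fun v₁ hv₁ v₂ hv₂ a b ha hb hab => ?_⟩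
  obtain ⟨s, hs⟩ := hsupp _ (hQ hv₁ hv₂ ha hb hab)
  have h₁ := mul_le_mul_of_nonneg_left (hs v₁ hv₁) ha
  have h₂ := mul_le_mul_of_nonneg_left (hs v₂ hv₂) hb
  have hsum : a * ⟪s, v₁ - (a • v₁ + b • v₂)⟫ + b * ⟪s, v₂ - (a • v₁ + b • v₂)⟫ = 0 := by
    rw [← real_inner_smul_right, ← real_inner_smul_right, ← inner_add_right]
    have : a • (v₁ - (a • v₁ + b • v₂)) + b • (v₂ - (a • v₁ + b • v₂)) =
        (1 - (a + b)) • (a • v₁ + b • v₂) := by module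
    rw [this, hab, sub_self, zero_smul, inner_zero_right]
  have hw : (a + b) * h (a • v₁ + b • v₂) = h (a • v₁ + b • v₂) := by rw [hab, one_mul]
  simp only [smul_eq_mul]
  linarith

theorem mul_norm_le_of_forall_inner_le_sub {g : F → ℝ} {S : Set F} {u x x₀ s : F} {t ρ M : ℝ}
    (hsupp : ∀ w ∈ S, ⟪s, w - u⟫ ≤ g w - g u) (hx : x ∈ S) (hxu : g x ≤ g u)
    (ht₀ : 0 < t) (ht₁ : t ≤ 1) (hu : u = x + t • (x₀ - x)) (hρ : 0 ≤ ρ)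
    (hball : Metric.closedBall x₀ ρ ⊆ S) (hM : ∀ w ∈ Metric.closedBall x₀ ρ, g w ≤ M) :
    ρ * ‖s‖ ≤ M - g u := by
  have hdir : 0 ≤ ⟪s, x₀ - u⟫ := by
    have hxu' := hsupp x hx
    rw [show x - u = -t • (x₀ - x) by rw [hu]; module, real_inner_smul_right] at hxu'
    rw [show x₀ - u = (1 - t) • (x₀ - x) by rw [hu]; module, real_inner_smul_right]
    have : 0 ≤ ⟪s, x₀ - x⟫ := by nlinarith
    exact mul_nonneg (by linarith) this
  obtain ⟨v, hv, hsv⟩ := exists_norm_le_one_inner_eq_norm s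
  have hw : x₀ + ρ • v ∈ Metric.closedBall x₀ ρ := by
    rw [Metric.mem_closedBall, dist_eq_norm, add_sub_cancel_left, norm_smul,
      Real.norm_of_nonneg hρ]
    exact mul_le_of_le_one_right hρ hv
  have hsw := hsupp _ (hball hw)
  rw [show x₀ + ρ • v - u = (x₀ - u) + ρ • v by abel, inner_add_right, real_inner_smul_right,
    hsv] at hsw
  linarith [hM _ hw]

variable [CompleteSpace F]

theorem HasGradientAt.hasDerivAt_comp_lineMap {f : F → ℝ} {g x : F} (hf : HasGradientAt f g x)
    (z : F) : HasDerivAt (f ∘ AffineMap.lineMap (k := ℝ) x z) ⟪g, z - x⟫ 0 := by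
  have hf' := hasGradientAt_iff_hasFDerivAt.mp hf
  rw [← AffineMap.lineMap_apply_zero (k := ℝ) x z] at hf'
  simpa using hf'.comp_hasDerivAt (0 : ℝ) AffineMap.hasDerivAt_lineMap

theorem HasGradientAt.sub_inner_right {f : F → ℝ} {g x : F} (hf : HasGradientAt f g x) (y : F) :
    HasGradientAt (fun z => f z - ⟪z, y⟫) (g - y) x := by
  have hy : HasFDerivAt (fun z => ⟪z, y⟫) (InnerProductSpace.toDual ℝ F y) x := by
    convert (InnerProductSpace.toDual ℝ F y).hasFDerivAt (x := x) using 1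
    ext z
    exact real_inner_comm y z
  rw [hasGradientAt_iff_hasFDerivAt, map_sub]
  exact (hasGradientAt_iff_hasFDerivAt.mp hf).sub hy

theorem IsLocalMin.hasGradientAt_eq_zero {g : F → ℝ} {x s : F}
    (hmin : IsLocalMin g x) (hg : HasGradientAt g s x) : s = 0 := by
  have := hmin.hasFDerivAt_eq_zero (hasGradientAt_iff_hasFDerivAt.mp hg)
  rwa [map_eq_zero_iff _ (InnerProductSpace.toDual ℝ F).injective] at this

theorem ConvexOn.inner_le_sub_of_hasGradientAt {f : F → ℝ} {S : Set F} (hf : ConvexOn ℝ S f)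
    {x z g : F} (hx : x ∈ S) (hz : z ∈ S) (hg : HasGradientAt f g x) :
    ⟪g, z - x⟫ ≤ f z - f x := by
  have := (hf.comp_affineMap (AffineMap.lineMap (k := ℝ) x z)).le_slope_of_hasDerivAt
    (by simpa using hx) (by simpa using hz) zero_lt_one (hg.hasDerivAt_comp_lineMap z)
  simpa [slope] using this

theorem StrictConvexOn.inner_lt_sub_of_hasGradientAt {f : F → ℝ} {S : Set F}
    (hf : StrictConvexOn ℝ S f) {x z g : F} (hx : x ∈ S) (hz : z ∈ S) (hzx : z ≠ x)
    (hg : HasGradientAt f g x) : ⟪g, z - x⟫ < f z - f x := by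
  set m : F := (1 / 2 : ℝ) • x + (1 / 2 : ℝ) • z
  have hm : m ∈ S := hf.1 hx hz (by norm_num) (by norm_num) (by norm_num)
  have hle : ⟪g, m - x⟫ ≤ f m - f x := hf.convexOn.inner_le_sub_of_hasGradientAt hx hm hg
  have hlt : f m < (1 / 2 : ℝ) * f x + (1 / 2 : ℝ) * f z :=
    hf.2 hx hz hzx.symm (by norm_num) (by norm_num) (by norm_num)
  have hmx : m - x = (1 / 2 : ℝ) • (z - x) := by module
  rw [hmx, real_inner_smul_right] at hle
  linarith

theorem ConvexOn.inner_sub_le_sub_of_hasGradientAt {h k : F → ℝ} {Q : Set F}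
    (hh : ConvexOn ℝ Q h) {u v s k' : F} (hu : u ∈ Q) (hv : v ∈ Q) (hk : HasGradientAt k k' u)
    (hs : ∀ w ∈ Q, ⟪s, w - u⟫ ≤ h w + k w - (h u + k u)) : ⟪s - k', v - u⟫ ≤ h v - h u := by
  have hline := hh.comp_affineMap (AffineMap.lineMap (k := ℝ) u v)
  rw [inner_sub_left, sub_le_iff_le_add', ← sub_le_iff_le_add]
  refine (hk.hasDerivAt_comp_lineMap v).le_of_forall_mul_le_sub fun t ht => ?_
  have hw : AffineMap.lineMap u v t ∈ Q :=
    hh.1.segment_subset hu hv (segment_eq_image_lineMap ℝ u v ▸ ⟨t, ⟨ht.1.le, ht.2⟩, rfl⟩)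
  have hconv := hline.2 (show (0 : ℝ) ∈ _ by simpa using hu) (show (1 : ℝ) ∈ _ by simpa using hv)
    (by linarith [ht.2] : (0 : ℝ) ≤ 1 - t) ht.1.le (by ring : 1 - t + t = 1)
  have hsw := hs _ hw
  simp only [Function.comp_apply, smul_eq_mul, mul_zero, mul_one, zero_add,
    AffineMap.lineMap_apply_zero, AffineMap.lineMap_apply_one] at hconv ⊢
  have hwu : AffineMap.lineMap u v t - u = t • (v - u) := by
    rw [AffineMap.lineMap_apply_module', add_sub_cancel_right]
  rw [hwu, real_inner_smul_right] at hsw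
  nlinarith

end InnerProduct

section FiniteDimensional

variable {F : Type*} [NormedAddCommGroup F] [InnerProductSpace ℝ F] [FiniteDimensional ℝ F]

theorem StrictConvexOn.exists_pos_mul_norm_sub_le {f : F → ℝ} {S : Set F} (hf : ConvexOn ℝ S f)
    (hf' : StrictConvexOn ℝ (interior S) f) {x₀ g : F} (hx₀ : x₀ ∈ interior S)
    (hg : HasGradientAt f g x₀) : ∃ ε > 0, ∃ C, ∀ z ∈ S, ε * ‖z - x₀‖ ≤ f z - ⟪z, g⟫ + C := by
  set G := fun z => f z - ⟪z, g⟫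
  have hG : ∀ z, G z - G x₀ = f z - f x₀ - ⟪g, z - x₀⟫ := fun z => by
    simp only [G, inner_sub_right, real_inner_comm g]; ring
  have hGle : ∀ z ∈ S, G x₀ ≤ G z := fun z hz => by
    linarith [hG z, hf.inner_le_sub_of_hasGradientAt (interior_subset hx₀) hz hg]
  rcases subsingleton_or_nontrivial F with hF | hF
  · exact ⟨1, one_pos, -G x₀, fun z _ => by simp [G, Subsingleton.elim z x₀]⟩
  obtain ⟨r, hr, hball⟩ := Metric.nhds_basis_closedBall.mem_iff.1 (isOpen_interior.mem_nhds hx₀)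
  have hsphere : Metric.sphere x₀ r ⊆ interior S := Metric.sphere_subset_closedBall.trans hball
  have hGcont : ContinuousOn G (Metric.sphere x₀ r) :=
    ((hf.continuousOn_interior.mono hsphere).sub (by fun_prop))
  obtain ⟨w, hw, hwmin⟩ := (isCompact_sphere x₀ r).exists_isMinOn
    (NormedSpace.sphere_nonempty.2 hr.le) hGcont
  have hwx₀ : w ≠ x₀ := by
    rintro rfl
    rw [Metric.mem_sphere, dist_self] at hw
    exact hr.ne hw
  -- `G` exceeds its minimum `G x₀` by `m > 0` on a small sphere, hence grows with slope `m / r`.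
  set m := G w - G x₀ with hm_def
  have hm : 0 < m := by
    linarith [hG w, hf'.inner_lt_sub_of_hasGradientAt hx₀ (hsphere hw) hwx₀ hg]
  refine ⟨m / r, by positivity, m - G x₀, fun z hz => ?_⟩
  rw [div_mul_eq_mul_div, div_le_iff₀ hr]
  rcases le_or_gt r ‖z - x₀‖ with hrz | hrz
  · have := (hf.sub_inner_right g).mul_norm_sub_le_of_forall_norm_sub_eq (interior_subset hx₀)
      hz hr hrz (m := m) fun v _ hv => by
        have hwv : G w ≤ G v := hwmin (mem_sphere_iff_norm.2 hv)
        linarith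
    nlinarith [hGle z hz]
  · nlinarith [hGle z hz]

end FiniteDimensional

section Conjugate

variable {d : ℕ} {f : E d → ℝ} {S : Set (E d)}

theorem le_conj {z : E d} (hz : z ∈ S) (y : E d) : ((⟪z, y⟫ - f z : ℝ) : EReal) ≤ conj f S y :=
  le_iSup₂_of_le z hz le_rfl

theorem conj_le_coe {y : E d} {C : ℝ} (h : ∀ z ∈ S, ⟪z, y⟫ - f z ≤ C) : conj f S y ≤ C :=
  iSup₂_le fun z hz => EReal.coe_le_coe_iff.2 (h z hz)

theorem conj_ne_bot (hS : S.Nonempty) (y : E d) : conj f S y ≠ ⊥ := by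
  obtain ⟨z, hz⟩ := hS
  exact ne_bot_of_le_ne_bot (EReal.coe_ne_bot _) (le_conj hz y)

theorem inner_sub_le_toReal_conj {z y : E d} (hz : z ∈ S) (hy : conj f S y ≠ ⊤) :
    ⟪z, y⟫ - f z ≤ (conj f S y).toReal := by
  rw [← EReal.toReal_coe (⟪z, y⟫ - f z)]
  exact EReal.toReal_le_toReal (le_conj hz y) (EReal.coe_ne_bot _) hy

theorem toReal_conj_le (hS : S.Nonempty) {y : E d} {C : ℝ} (h : ∀ z ∈ S, ⟪z, y⟫ - f z ≤ C) :
    (conj f S y).toReal ≤ C := by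
  rw [← EReal.toReal_coe C]
  exact EReal.toReal_le_toReal (conj_le_coe h) (conj_ne_bot hS y) (EReal.coe_ne_top C)

theorem conj_eq_of_hasGradientAt (hf : ConvexOn ℝ S f) {x g : E d} (hx : x ∈ S)
    (hg : HasGradientAt f g x) : conj f S g = ((⟪x, g⟫ - f x : ℝ) : EReal) := by
  refine le_antisymm (conj_le_coe fun z hz => ?_) (le_conj hx g)
  have := hf.inner_le_sub_of_hasGradientAt hx hz hg
  rw [inner_sub_right] at this
  rw [real_inner_comm g z, real_inner_comm g x]
  linarith

theorem inner_sub_le_toReal_conj_sub (hf : ConvexOn ℝ S f) {x g v : E d} (hx : x ∈ S)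
    (hg : HasGradientAt f g x) (hv : conj f S v ≠ ⊤) :
    ⟪x, v - g⟫ ≤ (conj f S v).toReal - (conj f S g).toReal := by
  rw [conj_eq_of_hasGradientAt hf hx hg, EReal.toReal_coe, inner_sub_right]
  linarith [inner_sub_le_toReal_conj hx hv]

theorem toReal_conj_sub_toReal_conj_sub_inner (hf : ConvexOn ℝ S f) {x y gx gy : E d}
    (hx : x ∈ S) (hy : y ∈ S) (hgx : HasGradientAt f gx x) (hgy : HasGradientAt f gy y) :
    (conj f S gy).toReal - (conj f S gx).toReal - ⟪x, gy - gx⟫ = f x - f y - ⟪gy, x - y⟫ := by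
  rw [conj_eq_of_hasGradientAt hf hx hgx, conj_eq_of_hasGradientAt hf hy hgy, EReal.toReal_coe,
    EReal.toReal_coe, inner_sub_right, inner_sub_right, real_inner_comm gy x,
    real_inner_comm gy y]
  ring

theorem inner_smul_sub_le_sub_iff (hf : ConvexOn ℝ S f) {x y gx gy : E d} (hx : x ∈ S)
    (hy : y ∈ S) (hgx : HasGradientAt f gx x) (hgy : HasGradientAt f gy y) (L : ℝ)
    (k : E d → ℝ) (k' : E d) :
    ⟪L • x - k', gy - gx⟫ ≤
        (L * (conj f S gy).toReal - k gy) - (L * (conj f S gx).toReal - k gx) ↔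
      k gy - k gx - ⟪k', gy - gx⟫ ≤ L * (f x - f y - ⟪gy, x - y⟫) := by
  have h := toReal_conj_sub_toReal_conj_sub_inner hf hx hy hgx hgy
  rw [inner_sub_left, real_inner_smul_left, ← h]
  constructor <;> intro <;> linarith

theorem ConvexOn.inner_smul_sub_le_sub_of_conj {Q : Set (E d)} {L : ℝ} {k : E d → ℝ}
    (hh : ConvexOn ℝ Q (fun y => L * (conj f S y).toReal - k y)) (hL : 0 ≤ L)
    (hQ : Q ⊆ {y | conj f S y ≠ ⊤}) (hf : ConvexOn ℝ S f) {x g v k' : E d} (hx : x ∈ S)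
    (hg : HasGradientAt f g x) (hgQ : g ∈ Q) (hv : v ∈ Q) (hk : HasGradientAt k k' g) :
    ⟪L • x - k', v - g⟫ ≤ (L * (conj f S v).toReal - k v) - (L * (conj f S g).toReal - k g) := by
  refine hh.inner_sub_le_sub_of_hasGradientAt hgQ hv hk fun w hw => ?_
  have := mul_le_mul_of_nonneg_left (inner_sub_le_toReal_conj_sub hf hx hg (hQ hw)) hL
  rw [real_inner_smul_left, sub_add_cancel, sub_add_cancel]
  linarith

theorem convexOn_toReal_conj (hS : S.Nonempty) :
    ConvexOn ℝ {y | conj f S y ≠ ⊤} (fun y => (conj f S y).toReal) := by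
  have hcomb : ∀ y₁ ∈ {y | conj f S y ≠ ⊤}, ∀ y₂ ∈ {y | conj f S y ≠ ⊤}, ∀ a b : ℝ, 0 ≤ a →
      0 ≤ b → a + b = 1 → ∀ z ∈ S, ⟪z, a • y₁ + b • y₂⟫ - f z ≤
        a * (conj f S y₁).toReal + b * (conj f S y₂).toReal := by
    intro y₁ hy₁ y₂ hy₂ a b ha hb hab z hz
    have h₁ := mul_le_mul_of_nonneg_left (inner_sub_le_toReal_conj hz hy₁) ha
    have h₂ := mul_le_mul_of_nonneg_left (inner_sub_le_toReal_conj hz hy₂) hb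
    rw [inner_add_right, real_inner_smul_right, real_inner_smul_right]
    linear_combination h₁ + h₂ + f z * hab
  refine ⟨fun y₁ hy₁ y₂ hy₂ a b ha hb hab => ?_, fun y₁ hy₁ y₂ hy₂ a b ha hb hab => ?_⟩
  · exact ne_top_of_le_ne_top (EReal.coe_ne_top _)
      (conj_le_coe (hcomb y₁ hy₁ y₂ hy₂ a b ha hb hab))
  · exact toReal_conj_le hS (hcomb y₁ hy₁ y₂ hy₂ a b ha hb hab)

theorem mem_interior_dom_conj_of_coercive {ε C : ℝ} (hε : 0 < ε) {x₀ y₀ : E d}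
    (hcoer : ∀ z ∈ S, ε * ‖z - x₀‖ ≤ f z - ⟪z, y₀⟫ + C) :
    y₀ ∈ interior {y | conj f S y ≠ ⊤} := by
  refine mem_interior.2 ⟨Metric.ball y₀ ε, fun y hy => ?_, Metric.isOpen_ball,
    Metric.mem_ball_self hε⟩
  rw [Metric.mem_ball, dist_eq_norm] at hy
  refine ne_top_of_le_ne_top (EReal.coe_ne_top (⟪x₀, y - y₀⟫ + C)) (conj_le_coe fun z hz => ?_)
  have hsplit : ⟪z, y⟫ = ⟪z - x₀, y - y₀⟫ + ⟪x₀, y - y₀⟫ + ⟪z, y₀⟫ := by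
    simp only [inner_sub_left, inner_sub_right]; ring
  have hcs : ⟪z - x₀, y - y₀⟫ ≤ ε * ‖z - x₀‖ := by
    rw [mul_comm]
    exact (real_inner_le_norm _ _).trans (by gcongr)
  linarith [hcoer z hz]

theorem exists_pos_mul_norm_le_of_mem_interior_dom_conj (hS : S.Nonempty) {y₀ : E d}
    (hy₀ : y₀ ∈ interior {y | conj f S y ≠ ⊤}) :
    ∃ ε > 0, ∃ C, ∀ z ∈ S, ε * ‖z‖ ≤ f z - ⟪z, y₀⟫ + C := by
  set ψ := fun y => (conj f S y).toReal
  have hψ : ContinuousAt ψ y₀ :=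
    (convexOn_toReal_conj hS).continuousOn_interior.continuousAt (isOpen_interior.mem_nhds hy₀)
  obtain ⟨ε, hε, hball⟩ := Metric.nhds_basis_closedBall.mem_iff.1
    ((hψ.eventually (gt_mem_nhds (lt_add_one (ψ y₀)))).and (isOpen_interior.mem_nhds hy₀))
  refine ⟨ε, hε, ψ y₀ + 1, fun z hz => ?_⟩
  obtain ⟨v, hv, hzv⟩ := exists_norm_le_one_inner_eq_norm z
  have hy : y₀ + ε • v ∈ Metric.closedBall y₀ ε := by
    rw [Metric.mem_closedBall, dist_eq_norm, add_sub_cancel_left, norm_smul,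
      Real.norm_of_nonneg hε.le]
    exact mul_le_of_le_one_right hε.le hv
  obtain ⟨hψy, hdom⟩ := hball hy
  have := inner_sub_le_toReal_conj hz (interior_subset hdom)
  rw [inner_add_right, real_inner_smul_right, hzv] at this
  linarith

end Conjugate

section Legendre

variable {d : ℕ} {f : E d → ℝ} {S : Set (E d)} {f' : E d → E d}

theorem IsEssentiallySmooth.mem_interior_of_isMinOn (hs : IsEssentiallySmooth f S f')
    (hf : ConvexOn ℝ S f) {x y : E d} (hx : x ∈ S)
    (hmin : IsMinOn (fun z => f z - ⟪z, y⟫) S x) : x ∈ interior S := by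
  by_contra hx'
  obtain ⟨⟨x₀, hx₀⟩, hgrad, hblow⟩ := hs
  set g := fun z => f z - ⟪z, y⟫
  obtain ⟨ρ, hρ, hball⟩ := Metric.nhds_basis_closedBall.mem_iff.1 (isOpen_interior.mem_nhds hx₀)
  obtain ⟨M, hM⟩ := (isCompact_closedBall x₀ ρ).bddAbove_image
    ((hf.continuousOn_interior.mono hball).sub (by fun_prop) : ContinuousOn g _)
  set t : ℕ → ℝ := fun n => 1 / ((n : ℝ) + 1)
  have ht₀ : ∀ n, 0 < t n := fun n => by positivity
  have ht₁ : ∀ n, t n ≤ 1 := fun n => div_le_one_of_le₀ (by simp) (by positivity)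
  set u : ℕ → E d := fun n => x + t n • (x₀ - x)
  have hu : ∀ n, u n ∈ interior S := fun n => by
    rw [show u n = t n • x₀ + (1 - t n) • x by module]
    exact hf.1.combo_interior_closure_mem_interior hx₀ (subset_closure hx) (ht₀ n)
      (by linarith [ht₁ n]) (by ring)
  have hlim : Tendsto u atTop (𝓝 x) := by
    have ht : Tendsto t atTop (𝓝 0) := tendsto_one_div_add_atTop_nhds_zero_nat
    simpa using tendsto_const_nhds.add (ht.smul_const (x₀ - x))
  -- Since `x` minimizes `g`, the gradients of `g` on the segment from `x` to `x₀` are bounded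
  -- by the oscillation of `g` on a ball around `x₀`.
  have hbound : ∀ n, ‖f' (u n)‖ ≤ (M - g x) / ρ + ‖y‖ := fun n => by
    have hsupp : ∀ w ∈ S, ⟪f' (u n) - y, w - u n⟫ ≤ g w - g (u n) := fun w hw =>
      (hf.sub_inner_right y).inner_le_sub_of_hasGradientAt (interior_subset (hu n)) hw
        ((hgrad _ (hu n)).sub_inner_right y)
    have := mul_norm_le_of_forall_inner_le_sub hsupp hx (hmin (interior_subset (hu n)))
      (ht₀ n) (ht₁ n) rfl hρ.le (hball.trans interior_subset) fun w hw => hM ⟨w, hw, rfl⟩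
    have hgu : g x ≤ g (u n) := hmin (interior_subset (hu n))
    calc ‖f' (u n)‖ ≤ ‖f' (u n) - y‖ + ‖y‖ := norm_le_norm_sub_add _ _
      _ ≤ (M - g x) / ρ + ‖y‖ := by
        gcongr
        rw [le_div_iff₀ hρ]
        linarith
  obtain ⟨n, hn⟩ := ((hblow u x hu ⟨subset_closure hx, hx'⟩ hlim).eventually_gt_atTop
    ((M - g x) / ρ + ‖y‖)).exists
  exact (hbound n).not_gt hn

theorem StrictConvexOn.mem_interior_dom_conj (hf : ConvexOn ℝ S f)
    (hf' : StrictConvexOn ℝ (interior S) f) {x g : E d} (hx : x ∈ interior S)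
    (hg : HasGradientAt f g x) : g ∈ interior {y | conj f S y ≠ ⊤} := by
  obtain ⟨ε, hε, C, hcoer⟩ := hf'.exists_pos_mul_norm_sub_le hf hx hg
  exact mem_interior_dom_conj_of_coercive hε hcoer

theorem IsLegendre.exists_eq_of_mem_interior_dom_conj (hf : IsLegendre f S f') {y : E d}
    (hy : y ∈ interior {y | conj f S y ≠ ⊤}) : ∃ x ∈ interior S, f' x = y := by
  obtain ⟨⟨hS, hconv, hepi⟩, hs, -⟩ := hf
  obtain ⟨ε, hε, C, hcoer⟩ := exists_pos_mul_norm_le_of_mem_interior_dom_conj hS hy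
  obtain ⟨x, hx, hmin⟩ :=
    exists_isMinOn_of_isClosed_epigraph hS (isClosed_epigraph_sub_inner hepi y) hε hcoer
  have hx' := hs.mem_interior_of_isMinOn hconv hx hmin
  refine ⟨x, hx', sub_eq_zero.1 ?_⟩
  exact (hmin.isLocalMin (mem_interior_iff_mem_nhds.1 hx')).hasGradientAt_eq_zero
    ((hs.2.1 x hx').sub_inner_right y)

theorem IsLegendre.image_interior_eq (hf : IsLegendre f S f') :
    f' '' interior S = interior {y | conj f S y ≠ ⊤} := by
  refine subset_antisymm ?_ fun y hy => hf.exists_eq_of_mem_interior_dom_conj hy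
  rintro _ ⟨x, hx, rfl⟩
  exact hf.2.2.mem_interior_dom_conj hf.1.2.1 hx (hf.2.1.2.1 x hx)

end Legendre

/-- for Legendre convex `f, k`, `k` is `L*`-smooth relative to `f*` on
`int(dom f*)` iff `∇f(int(dom f)) ⊆ int(dom k)` and
`D_k(∇f(y), ∇f(x)) ≤ L* · D_f(x, y)` for all `x, y ∈ int(dom f)`. -/
theorem stmt7 {d : ℕ} (f k : E d → ℝ) (Sf Sk : Set (E d)) (f' k' : E d → E d)
    (hf : IsLegendre f Sf f') (hk : IsLegendre k Sk k')
    (L : ℝ) (hL : 0 ≤ L) :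
    RelSmoothOn k Sk (conj f Sf) (interior {y | conj f Sf y ≠ ⊤}) L ↔
      ((∀ x ∈ interior Sf, f' x ∈ interior Sk) ∧
       ∀ x ∈ interior Sf, ∀ y ∈ interior Sf,
         k (f' y) - k (f' x) - ⟪k' (f' x), f' y - f' x⟫ ≤
           L * (f x - f y - ⟪f' y, x - y⟫)) := by
  have himage : f' '' interior Sf = interior {y | conj f Sf y ≠ ⊤} := hf.image_interior_eq
  obtain ⟨⟨hS, hconv, -⟩, ⟨-, hgrad, -⟩, -⟩ := hf
  have hiff := fun x hx y hy => inner_smul_sub_le_sub_iff hconv (interior_subset hx)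
    (interior_subset hy) (hgrad x hx) (hgrad y hy) L k (k' (f' x))
  have hmaps : ∀ x ∈ interior Sf, f' x ∈ interior {y | conj f Sf y ≠ ⊤} :=
    fun x hx => himage ▸ mem_image_of_mem f' hx
  constructor
  · rintro ⟨hQS, -, hQconv⟩
    have hQS' := interior_maximal hQS isOpen_interior
    refine ⟨fun x hx => hQS' (hmaps x hx), fun x hx y hy => (hiff x hx y hy).1 ?_⟩
    exact hQconv.inner_smul_sub_le_sub_of_conj hL interior_subset hconv (interior_subset hx)
      (hgrad x hx) (hmaps x hx) (hmaps y hy) (hk.2.1.2.1 _ (hQS' (hmaps x hx)))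
  · rintro ⟨hmapsSk, hineq⟩
    refine ⟨?_, fun y hy => ⟨interior_subset hy, conj_ne_bot hS y⟩,
      convexOn_of_forall_exists_inner_le_sub (convexOn_toReal_conj hS).1.interior ?_⟩
    · rw [← himage]
      rintro _ ⟨x, hx, rfl⟩
      exact interior_subset (hmapsSk x hx)
    · rw [← himage]
      rintro _ ⟨x, hx, rfl⟩
      refine ⟨L • x - k' (f' x), ?_⟩
      rintro _ ⟨y, hy, rfl⟩
      exact (hiff x hx y hy).2 (hineq x hx y hy)
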